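/- Let G be a group acting continuously on topological spaces E and B, where B is a metric space whose metric d is G-invariant, i.e. d(g·x, g·y) = d(x,y) for all g ∈ G and x, y ∈ B. If an equivariant continuous map p : E → B admits a G-lifting function, then p admits a regular G-lifting function: an equivariant continuous λ : Ω_p → C(I,E) with λ(e,w)(0) = e, p(λ(e,w)(t)) = w(t) for all (e,w) ∈ Ω_p and t ∈ I, and λ(e, c_{p(e)}) = c_e for every e ∈ E, where c_b denotes the constant path at b. -/

import Mathlib

open unitInterval

/-- The diagonal `G`-action on the space `Ω_p = {(e,w) ∈ E × C(I,B) : p e = w 0}`. -/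
def omegaSmul {G E B : Type*} [Group G] [TopologicalSpace E] [TopologicalSpace B]
    [MulAction G E] [MulAction G B] [ContinuousConstSMul G E] [ContinuousConstSMul G B]
    (p : E → B) (hpe : ∀ (g : G) (e : E), p (g • e) = g • p e) (g : G)
    (q : {q : E × C(I, B) // p q.1 = q.2 0}) : {q : E × C(I, B) // p q.1 = q.2 0} :=
  ⟨(g • q.1.1, g • q.1.2), by
    show p (g • q.1.1) = g • q.1.2 0
    rw [hpe, q.2]⟩

/-!
Hurewicz's trick. Let `c(w) = min 1 (d(w, constant path at w 0))` (`spread`), and let `w̃`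
(`compress w`) run through `w` on `[0, c(w)]` and then stay at `w 1`. From a lifting function `λ`
one gets `λ'(e, w)(t) = λ(e, w̃)(t c(w))`, which is constant when `w` is. Near a constant
path `w₀`, `w̃` is uniformly close to `w₀` whatever the time change, so `w ↦ w̃` is continuous
although `t / c(w)` blows up. Since `G` acts by isometries, `c` is `G`-invariant and `λ'` stays
equivariant.
-/

open ContinuousMap Set

section CompactDomain

variable {X B : Type*} [TopologicalSpace X] [CompactSpace X] [PseudoMetricSpace B]

theorem ContinuousAt.apply_of_eq_const {Y : Type*} [TopologicalSpace Y] {F : Y → C(X, B)}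
    {y : Y} {b : B} (hF : ContinuousAt F y) (hb : F y = const X b) (f : Y → X) :
    ContinuousAt (fun z => F z (f z)) y := by
  rw [ContinuousAt, hb, const_apply, tendsto_iff_dist_tendsto_zero]
  rw [ContinuousAt, hb, tendsto_iff_dist_tendsto_zero] at hF
  exact squeeze_zero (fun _ => dist_nonneg)
    (fun z => dist_apply_le_dist (f := F z) (g := const X b) (f z)) hF

instance ContinuousMap.instIsIsometricSMul {M : Type*} [SMul M B] [IsIsometricSMul M B] :
    IsIsometricSMul M C(X, B) where
  isometry_smul c := Isometry.of_dist_eq fun f h => le_antisymm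
    ((ContinuousMap.dist_le dist_nonneg).2 fun x => by
      simpa only [smul_apply, dist_smul] using dist_apply_le_dist x)
    ((ContinuousMap.dist_le dist_nonneg).2 fun x => by
      simpa only [smul_apply, dist_smul] using dist_apply_le_dist (f := c • f) (g := c • h) x)

end CompactDomain

noncomputable section

namespace PathLifting

section Reparametrization

variable {B : Type*} [MetricSpace B]

def spread (ω : C(I, B)) : I := projIcc (0 : ℝ) 1 zero_le_one (dist ω (const I (ω 0)))

theorem continuous_spread : Continuous (spread (B := B)) :=
  continuous_projIcc.comp <| continuous_id.dist <| continuous_const'.comp (continuous_eval_const 0)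

theorem spread_eq_zero_iff {ω : C(I, B)} : spread ω = 0 ↔ ω = const I (ω 0) :=
  (projIcc_eq_left (zero_lt_one' ℝ)).trans dist_le_zero

theorem spread_const (b : B) : spread (const I b) = 0 :=
  spread_eq_zero_iff.2 rfl

def compressFun (x : C(I, B) × I) : B :=
  x.1 (projIcc (0 : ℝ) 1 zero_le_one (x.2 / spread x.1))

theorem continuous_compressFun : Continuous (compressFun (B := B)) := by
  refine continuous_iff_continuousAt.2 fun ⟨ω, s⟩ => ?_
  by_cases h : spread ω = 0
  · exact ContinuousAt.apply_of_eq_const (F := Prod.fst) (y := (ω, s)) continuousAt_fst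
      (spread_eq_zero_iff.1 h) _
  · have hdiv : ContinuousAt (fun x : C(I, B) × I => (x.2 : ℝ) / spread x.1) (ω, s) :=
      (continuous_subtype_val.comp continuous_snd).continuousAt.div
        (continuous_subtype_val.comp (continuous_spread.comp continuous_fst)).continuousAt
        (coe_ne_zero.2 h)
    exact continuousAt_fst.eval (continuous_projIcc.continuousAt.comp hdiv)

def compress : C(C(I, B), C(I, B)) := ContinuousMap.curry ⟨compressFun, continuous_compressFun⟩

theorem compress_apply (ω : C(I, B)) (s : I) :
    compress ω s = ω (projIcc (0 : ℝ) 1 zero_le_one (s / spread ω)) :=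
  rfl

theorem compress_apply_zero (ω : C(I, B)) : compress ω 0 = ω 0 := by
  rw [compress_apply, Icc.coe_zero, zero_div, projIcc_left]
  rfl

theorem compress_apply_mul_spread (ω : C(I, B)) (t : I) : compress ω (t * spread ω) = ω t := by
  rw [compress_apply]
  by_cases h : spread ω = 0
  · have hω := spread_eq_zero_iff.1 h
    exact (DFunLike.congr_fun hω _).trans (DFunLike.congr_fun hω t).symm
  · rw [Icc.coe_mul, mul_div_cancel_right₀ _ (coe_ne_zero.2 h), projIcc_val]

def timeScale : C(C(I, B), C(I, I)) :=
  ContinuousMap.curry ⟨fun x => x.2 * spread x.1,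
    continuous_snd.mul (continuous_spread.comp continuous_fst)⟩

theorem timeScale_apply (ω : C(I, B)) (t : I) : timeScale ω t = t * spread ω :=
  rfl

end Reparametrization

section Equivariance

variable {G B : Type*} [MetricSpace B] [SMul G B] [IsIsometricSMul G B]

theorem spread_smul (g : G) (ω : C(I, B)) : spread (g • ω) = spread ω := by
  change projIcc (0 : ℝ) 1 zero_le_one (dist (g • ω) (g • const I (ω 0))) = spread ω
  rw [dist_smul]
  rfl

theorem compress_smul (g : G) (ω : C(I, B)) : compress (g • ω) = g • compress ω := by
  ext s
  rw [ContinuousMap.smul_apply, compress_apply, compress_apply, spread_smul,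
    ContinuousMap.smul_apply]

theorem timeScale_smul (g : G) (ω : C(I, B)) : timeScale (g • ω) = timeScale ω := by
  ext t
  rw [timeScale_apply, timeScale_apply, spread_smul]

end Equivariance

section Lifting

variable {E B : Type*} [TopologicalSpace E] [MetricSpace B] {p : E → B}

abbrev LiftingDomain (p : E → B) : Type _ := {q : E × C(I, B) // p q.1 = q.2 0}

def compressLift (q : LiftingDomain p) : LiftingDomain p :=
  ⟨(q.1.1, compress q.1.2), q.2.trans (compress_apply_zero _).symm⟩

theorem continuous_compressLift : Continuous (compressLift (p := p)) :=
  (continuous_subtype_val.fst.prodMk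
    ((map_continuous compress).comp continuous_subtype_val.snd)).subtype_mk _

def regularize (lam : LiftingDomain p → C(I, E)) (q : LiftingDomain p) : C(I, E) :=
  (lam (compressLift q)).comp (timeScale q.1.2)

variable {lam : LiftingDomain p → C(I, E)}

theorem regularize_apply (q : LiftingDomain p) (t : I) :
    regularize lam q t = lam (compressLift q) (t * spread q.1.2) :=
  rfl

theorem continuous_regularize (hlam : Continuous lam) : Continuous (regularize lam) :=
  continuous_comp'.comp <| ((map_continuous timeScale).comp continuous_subtype_val.snd).prodMk <|
    hlam.comp continuous_compressLift

theorem regularize_apply_zero (h0 : ∀ q, lam q 0 = q.1.1) (q : LiftingDomain p) :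
    regularize lam q 0 = q.1.1 := by
  rw [regularize_apply, zero_mul, h0]
  rfl

theorem apply_regularize_apply (hlift : ∀ q t, p (lam q t) = q.1.2 t) (q : LiftingDomain p)
    (t : I) : p (regularize lam q t) = q.1.2 t := by
  rw [regularize_apply, hlift]
  exact compress_apply_mul_spread q.1.2 t

theorem regularize_const (h0 : ∀ q, lam q 0 = q.1.1) (e : E) :
    regularize lam ⟨(e, const I (p e)), rfl⟩ = const I e := by
  ext t
  rw [regularize_apply, spread_const, mul_zero, h0]
  rfl

theorem regularize_omegaSmul {G : Type*} [Group G] [MulAction G E] [MulAction G B]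
    [ContinuousConstSMul G E] [IsIsometricSMul G B]
    {hpe : ∀ (g : G) (e : E), p (g • e) = g • p e}
    (hequiv : ∀ g q, lam (omegaSmul p hpe g q) = g • lam q) (g : G) (q : LiftingDomain p) :
    regularize lam (omegaSmul p hpe g q) = g • regularize lam q := by
  have hcompress : compressLift (omegaSmul p hpe g q) = omegaSmul p hpe g (compressLift q) :=
    Subtype.ext <| Prod.ext rfl (compress_smul g q.1.2)
  ext t
  rw [ContinuousMap.smul_apply, regularize_apply, regularize_apply, hcompress, hequiv,
    ContinuousMap.smul_apply]
  exact congrArg (g • lam (compressLift q) ·) (congrArg (t * ·) (spread_smul g q.1.2))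

end Lifting

end PathLifting

end

open PathLifting in
theorem regular_g_lifting_function_of_g_lifting_function_general
    {G E B : Type*} [Group G] [TopologicalSpace E] [MetricSpace B]
    [MulAction G E] [MulAction G B] [ContinuousConstSMul G E] [ContinuousConstSMul G B]
    (hd : ∀ (g : G) (x y : B), dist (g • x) (g • y) = dist x y)
    (p : E → B) (hpe : ∀ (g : G) (e : E), p (g • e) = g • p e)
    (hlift : ∃ lam : {q : E × C(I, B) // p q.1 = q.2 0} → C(I, E),
      Continuous lam ∧
      (∀ (g : G) (q : {q : E × C(I, B) // p q.1 = q.2 0}),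
        lam (omegaSmul p hpe g q) = g • lam q) ∧
      (∀ q : {q : E × C(I, B) // p q.1 = q.2 0}, lam q 0 = q.1.1) ∧
      (∀ (q : {q : E × C(I, B) // p q.1 = q.2 0}) (t : I), p (lam q t) = q.1.2 t)) :
    ∃ lam : {q : E × C(I, B) // p q.1 = q.2 0} → C(I, E),
      Continuous lam ∧
      (∀ (g : G) (q : {q : E × C(I, B) // p q.1 = q.2 0}),
        lam (omegaSmul p hpe g q) = g • lam q) ∧
      (∀ q : {q : E × C(I, B) // p q.1 = q.2 0}, lam q 0 = q.1.1) ∧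
      (∀ (q : {q : E × C(I, B) // p q.1 = q.2 0}) (t : I), p (lam q t) = q.1.2 t) ∧
      (∀ e : E, lam ⟨(e, ContinuousMap.const I (p e)), rfl⟩ = ContinuousMap.const I e) := by
  obtain ⟨lam, hcont, hequiv, h0, hproj⟩ := hlift
  have : IsIsometricSMul G B := ⟨fun g => Isometry.of_dist_eq (hd g)⟩
  exact ⟨regularize lam, continuous_regularize hcont, regularize_omegaSmul hequiv,
    regularize_apply_zero h0, apply_regularize_apply hproj, regularize_const h0⟩

/-- Equivariant Hurewicz regularity: if `B` carries a `G`-invariant metric and the equivariant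
map `p : E → B` admits a `G`-lifting function, then `p` admits a *regular* `G`-lifting function,
i.e. one sending the pair `(e, constant path at p e)` to the constant path at `e`. -/
theorem regular_g_lifting_function_of_g_lifting_function
    {G E B : Type*} [Group G] [TopologicalSpace E] [MetricSpace B]
    [MulAction G E] [MulAction G B] [ContinuousConstSMul G E] [ContinuousConstSMul G B]
    (hd : ∀ (g : G) (x y : B), dist (g • x) (g • y) = dist x y)
    (p : E → B) (hp : Continuous p) (hpe : ∀ (g : G) (e : E), p (g • e) = g • p e)
    (hlift : ∃ lam : {q : E × C(I, B) // p q.1 = q.2 0} → C(I, E),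
      Continuous lam ∧
      (∀ (g : G) (q : {q : E × C(I, B) // p q.1 = q.2 0}),
        lam (omegaSmul p hpe g q) = g • lam q) ∧
      (∀ q : {q : E × C(I, B) // p q.1 = q.2 0}, lam q 0 = q.1.1) ∧
      (∀ (q : {q : E × C(I, B) // p q.1 = q.2 0}) (t : I), p (lam q t) = q.1.2 t)) :
    ∃ lam : {q : E × C(I, B) // p q.1 = q.2 0} → C(I, E),
      Continuous lam ∧
      (∀ (g : G) (q : {q : E × C(I, B) // p q.1 = q.2 0}),
        lam (omegaSmul p hpe g q) = g • lam q) ∧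
      (∀ q : {q : E × C(I, B) // p q.1 = q.2 0}, lam q 0 = q.1.1) ∧
      (∀ (q : {q : E × C(I, B) // p q.1 = q.2 0}) (t : I), p (lam q t) = q.1.2 t) ∧
      (∀ e : E, lam ⟨(e, ContinuousMap.const I (p e)), rfl⟩ = ContinuousMap.const I e) :=
  regular_g_lifting_function_of_g_lifting_function_general hd p hpe hlift
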